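/- Let 0 ≤ α ≤ 652 and let Q(x,y) = (x⁴−y⁴)^α(x⁸+14x⁴y⁴+y⁸) as a polynomial in x,y over the rationals. If the coefficient of (x⁴)^{α+2−i}(−y⁴)^i in Q vanishes for some i with 0 ≤ i ≤ (α+2)/2, then (α, i) = (14, 1) or (α, i) = (223, 15). -/

import Mathlib

/-!
Put `p = α + 2 - i` and `q = i`. The coefficient is `(-1)^q (C(α,q) - 14 C(α,q-1) + C(α,q-2))`,
and rescaling each binomial coefficient to `C(α+2,q)` gives
`(α+1)(α+2) · coeff = (-1)^q C(α+2,q) (p(p-1) + q(q-1) - 14pq)`.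
So the coefficient vanishes exactly when `p² + q² = 14pq + p + q`. For `0 < q ≤ p` the Vieta jump
`(p, q) ↦ (q, 14q + 1 - p)` maps a solution to a strictly smaller one, so every solution with
`q ≤ p` lies on the chain `(1,0), (15,1), (210,15), (2926,210), …` or is `(0,0)`. Only `(15,1)` and
`(210,15)` satisfy `2 ≤ p + q ≤ 654`.
-/

open MvPolynomial

noncomputable abbrev Qpoly (α : ℕ) : MvPolynomial (Fin 2) ℚ :=
  ((X 0)^4 - (X 1)^4)^α * ((X 0)^8 + 14 * (X 0)^4 * (X 1)^4 + (X 1)^8)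

namespace Nat

theorem add_choose_mul_eq_add_two_choose (a b : ℕ) :
    (a + b).choose b * ((a + b + 1) * (a + b + 2)) =
      (a + b + 2).choose b * ((a + 1) * (a + 2)) := by
  have h1 := choose_mul_succ_eq (a + b) b
  have h2 := choose_mul_succ_eq (a + b + 1) b
  rw [show a + b + 1 - b = a + 1 by omega] at h1
  rw [show a + b + 1 + 1 - b = a + 2 by omega] at h2
  calc (a + b).choose b * ((a + b + 1) * (a + b + 2))
      = (a + b).choose b * (a + b + 1) * (a + b + 2) := by ring
    _ = (a + b + 1).choose b * (a + b + 1 + 1) * (a + 1) := by rw [h1]; ring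
    _ = _ := by rw [h2]; ring

theorem add_choose_mul_eq_add_two_choose_succ (a b : ℕ) :
    (a + b).choose b * ((a + b + 1) * (a + b + 2)) =
      (a + b + 2).choose (b + 1) * ((a + 1) * (b + 1)) := by
  have h1 := add_one_mul_choose_eq (a + b) b
  have h2 := choose_mul_succ_eq (a + b + 1) (b + 1)
  rw [show a + b + 1 + 1 - (b + 1) = a + 1 by omega] at h2
  calc (a + b).choose b * ((a + b + 1) * (a + b + 2))
      = (a + b + 1) * (a + b).choose b * (a + b + 2) := by ring
    _ = (a + b + 1).choose (b + 1) * (a + b + 1 + 1) * (b + 1) := by rw [h1]; ring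
    _ = _ := by rw [h2]; ring

theorem add_choose_mul_eq_add_two_choose_add_two (a b : ℕ) :
    (a + b).choose b * ((a + b + 1) * (a + b + 2)) =
      (a + b + 2).choose (b + 2) * ((b + 1) * (b + 2)) := by
  have h1 := add_one_mul_choose_eq (a + b) b
  have h2 := add_one_mul_choose_eq (a + b + 1) (b + 1)
  calc (a + b).choose b * ((a + b + 1) * (a + b + 2))
      = (a + b + 1) * (a + b).choose b * (a + b + 2) := by ring
    _ = (a + b + 1 + 1) * (a + b + 1).choose (b + 1) * (b + 1) := by rw [h1]; ring
    _ = _ := by rw [h2]; ring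

end Nat

noncomputable abbrev bideg (a b : ℕ) : Fin 2 →₀ ℕ := Finsupp.single 0 a + Finsupp.single 1 b

lemma bideg_inj {a b c d : ℕ} : bideg a b = bideg c d ↔ a = c ∧ b = d := by
  simp [Finsupp.ext_iff, Fin.forall_fin_two]

lemma bideg_le_bideg {a b c d : ℕ} : bideg a b ≤ bideg c d ↔ a ≤ c ∧ b ≤ d := by
  simp [Finsupp.le_def, Fin.forall_fin_two]

lemma bideg_tsub_bideg (a b c d : ℕ) : bideg a b - bideg c d = bideg (a - c) (b - d) := by
  ext i; fin_cases i <;> simp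

section Bivariate

variable {R : Type*}

lemma X_zero_pow_mul_X_one_pow [CommSemiring R] (a b : ℕ) :
    (X 0 ^ a * X 1 ^ b : MvPolynomial (Fin 2) R) = monomial (bideg a b) 1 := by
  simp [X_pow_eq_monomial, monomial_mul]

lemma pow_sub_pow_eq_sum_monomial [CommRing R] (d α : ℕ) :
    ((X 0)^d - (X 1)^d : MvPolynomial (Fin 2) R)^α =
      ∑ j ∈ Finset.range (α + 1),
        monomial (bideg (d * (α - j)) (d * j)) ((-1 : R) ^ j * α.choose j) := by
  rw [sub_eq_neg_add, add_pow]
  refine Finset.sum_congr rfl fun j _ => ?_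
  rw [← mul_one ((-1 : R) ^ j * _), ← C_mul_monomial, ← X_zero_pow_mul_X_one_pow]
  simp only [map_mul, map_pow, map_neg, map_one, map_natCast]
  ring

lemma coeff_pow_sub_pow [CommRing R] {d α a b : ℕ} (hd : 0 < d) (hab : a + b = α) :
    coeff (bideg (d * a) (d * b)) (((X 0)^d - (X 1)^d : MvPolynomial (Fin 2) R)^α) =
      (-1) ^ b * α.choose b := by
  rw [pow_sub_pow_eq_sum_monomial, coeff_sum,
    Finset.sum_eq_single_of_mem b (Finset.mem_range.2 (by omega))]
  · rw [show α - b = a by omega, coeff_monomial, if_pos rfl]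
  · intro j _ hjb
    rw [coeff_monomial, if_neg]
    rw [bideg_inj, Nat.mul_left_cancel_iff hd, Nat.mul_left_cancel_iff hd]
    omega

lemma coeff_bideg_mul_monomial [CommSemiring R] {d : ℕ} (hd : 0 < d) (P : MvPolynomial (Fin 2) R)
    (a b c e : ℕ) (r : R) :
    coeff (bideg (d * a) (d * b)) (P * monomial (bideg (d * c) (d * e)) r) =
      if c ≤ a ∧ e ≤ b then coeff (bideg (d * (a - c)) (d * (b - e))) P * r else 0 := by
  simp only [coeff_mul_monomial', bideg_le_bideg, bideg_tsub_bideg, Nat.mul_sub,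
    Nat.mul_le_mul_left_iff hd]

end Bivariate

lemma trinomial_eq_sum_monomial :
    ((X 0)^8 + 14 * (X 0)^4 * (X 1)^4 + (X 1)^8 : MvPolynomial (Fin 2) ℚ) =
      monomial (bideg (4 * 2) (4 * 0)) 1 + monomial (bideg (4 * 1) (4 * 1)) 14 +
        monomial (bideg (4 * 0) (4 * 2)) 1 := by
  rw [show (14 : ℚ) = 14 * 1 by norm_num, ← C_mul_monomial, ← X_zero_pow_mul_X_one_pow,
    ← X_zero_pow_mul_X_one_pow, ← X_zero_pow_mul_X_one_pow]
  simp only [mul_one, map_ofNat]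
  ring

lemma add_one_mul_add_two_mul_coeff_Qpoly {α p q : ℕ} (hpq : p + q = α + 2) :
    ((α + 1) * (α + 2) : ℚ) * coeff (bideg (4 * p) (4 * q)) (Qpoly α) =
      (-1) ^ q * (α + 2).choose q * (p * (p - 1) + q * (q - 1) - 14 * p * q) := by
  rw [Qpoly, trinomial_eq_sum_monomial, mul_add (_ ^ α), mul_add (_ ^ α), coeff_add, coeff_add,
    coeff_bideg_mul_monomial four_pos, coeff_bideg_mul_monomial four_pos,
    coeff_bideg_mul_monomial four_pos]
  have term_x8 : ((α + 1) * (α + 2) : ℚ) *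
      (if 2 ≤ p ∧ 0 ≤ q then
        coeff (bideg (4 * (p - 2)) (4 * (q - 0))) (((X 0)^4 - (X 1)^4)^α) * 1 else 0) =
      (-1) ^ q * (α + 2).choose q * (p * (p - 1)) := by
    split_ifs with h
    · obtain ⟨a, rfl⟩ : ∃ a, p = a + 2 := ⟨p - 2, by omega⟩
      obtain rfl : α = a + q := by omega
      rw [coeff_pow_sub_pow four_pos (by omega)]
      have := congrArg (Nat.cast : ℕ → ℚ) (Nat.add_choose_mul_eq_add_two_choose a q)
      push_cast [Nat.add_sub_cancel] at this ⊢
      linear_combination (-1 : ℚ) ^ q * this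
    · obtain rfl | rfl : p = 0 ∨ p = 1 := by omega
      all_goals simp
  have term_x4y4 : ((α + 1) * (α + 2) : ℚ) *
      (if 1 ≤ p ∧ 1 ≤ q then
        coeff (bideg (4 * (p - 1)) (4 * (q - 1))) (((X 0)^4 - (X 1)^4)^α) * 14 else 0) =
      -14 * (-1) ^ q * (α + 2).choose q * (p * q) := by
    split_ifs with h
    · obtain ⟨a, rfl⟩ : ∃ a, p = a + 1 := ⟨p - 1, by omega⟩
      obtain ⟨b, rfl⟩ : ∃ b, q = b + 1 := ⟨q - 1, by omega⟩
      obtain rfl : α = a + b := by omega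
      rw [coeff_pow_sub_pow four_pos (by omega)]
      have := congrArg (Nat.cast : ℕ → ℚ) (Nat.add_choose_mul_eq_add_two_choose_succ a b)
      push_cast [Nat.add_sub_cancel] at this ⊢
      linear_combination 14 * (-1 : ℚ) ^ b * this
    · obtain rfl | rfl : p = 0 ∨ q = 0 := by omega
      all_goals simp
  have term_y8 : ((α + 1) * (α + 2) : ℚ) *
      (if 0 ≤ p ∧ 2 ≤ q then
        coeff (bideg (4 * (p - 0)) (4 * (q - 2))) (((X 0)^4 - (X 1)^4)^α) * 1 else 0) =
      (-1) ^ q * (α + 2).choose q * (q * (q - 1)) := by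
    split_ifs with h
    · obtain ⟨b, rfl⟩ : ∃ b, q = b + 2 := ⟨q - 2, by omega⟩
      obtain rfl : α = p + b := by omega
      rw [coeff_pow_sub_pow four_pos (by omega)]
      have := congrArg (Nat.cast : ℕ → ℚ) (Nat.add_choose_mul_eq_add_two_choose_add_two p b)
      push_cast [Nat.add_sub_cancel] at this ⊢
      linear_combination (-1 : ℚ) ^ b * this
    · obtain rfl | rfl : q = 0 ∨ q = 1 := by omega
      all_goals simp
  linear_combination term_x8 + term_x4y4 + term_y8

lemma coeff_Qpoly_eq_zero_iff {α p q : ℕ} (hpq : p + q = α + 2) :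
    coeff (bideg (4 * p) (4 * q)) (Qpoly α) = 0 ↔ p ^ 2 + q ^ 2 = 14 * p * q + p + q := by
  have hN : ((α + 1) * (α + 2) : ℚ) ≠ 0 := by positivity
  have hchoose : ((α + 2).choose q : ℚ) ≠ 0 := by
    exact_mod_cast (Nat.choose_pos (by omega)).ne'
  rw [← mul_eq_zero_iff_left hN, add_one_mul_add_two_mul_coeff_Qpoly hpq,
    mul_eq_zero_iff_left (mul_ne_zero (pow_ne_zero _ (by norm_num)) hchoose),
    ← Nat.cast_inj (R := ℚ)]
  push_cast
  constructor <;> intro h <;> linear_combination h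

lemma exists_vieta_jump {p q : ℕ} (h : p ^ 2 + q ^ 2 = 14 * p * q + p + q) (hq : 0 < q)
    (hqp : q ≤ p) : ∃ r < q, p + r = 14 * q + 1 ∧ q ^ 2 + r ^ 2 = 14 * q * r + q + r := by
  have hp : p ≤ 14 * q + 1 := by nlinarith
  refine ⟨14 * q + 1 - p, ?_, by omega, ?_⟩
  · zify [hp] at h ⊢
    nlinarith
  · zify [hp] at h ⊢
    linear_combination h

lemma eq_of_sq_add_sq_eq_fourteen_mul_add_add {p q : ℕ} (h : p ^ 2 + q ^ 2 = 14 * p * q + p + q)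
    (hqp : q ≤ p) (hpq : p + q < 3136) :
    (p = 0 ∧ q = 0) ∨ (p = 1 ∧ q = 0) ∨ (p = 15 ∧ q = 1) ∨ (p = 210 ∧ q = 15) := by
  induction q using Nat.strong_induction_on generalizing p with
  | _ q ih =>
    rcases Nat.eq_zero_or_pos q with rfl | hq
    · have : p ≤ 1 := by nlinarith
      omega
    · obtain ⟨r, hrq, hpr, hr⟩ := exists_vieta_jump h hq hqp
      have := ih r hrq hr hrq.le (by omega)
      omega

theorem stmt_5 (α i : ℕ) (hα : α ≤ 652) (hi : 2 * i ≤ α + 2)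
    (h : MvPolynomial.coeff
      (Finsupp.single (0 : Fin 2) (4 * (α + 2 - i)) + Finsupp.single (1 : Fin 2) (4 * i))
      (Qpoly α) = 0) :
    (α = 14 ∧ i = 1) ∨ (α = 223 ∧ i = 15) := by
  have heq := (coeff_Qpoly_eq_zero_iff (by omega : α + 2 - i + i = α + 2)).1 h
  have := eq_of_sq_add_sq_eq_fourteen_mul_add_add heq (by omega) (by omega)
  omega
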